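/- arXiv:2007.01841 — 2 statements merged into one kernel-verified Lean document; each statement's English description precedes it below -/
import Mathlib

section
/- Let L be a finite-dimensional Lie algebra over a field K of characteristic zero, and let e, h ∈ L. If f, f' ∈ L are both such that (e, h, f) and (e, h, f') are sl₂-triples (i.e. [h,e] = 2e, [h,f] = −2f, [e,f] = h, and likewise for f'), then f = f'. (In other words, the third element of an sl₂-triple is uniquely determined by the other two.) -/
/-!
If `(e, h, f)` and `(e, h, f')` are both `sl₂`-triples with `h ≠ 0`, then `f - f'` is killed by
`ad e` and is an eigenvector of `ad h` with eigenvalue `-2`, i.e. a primitive vector of weight `-2`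
for the adjoint representation. In a finite-dimensional representation primitive weights are
natural numbers, so `f = f'`. When `h = 0`, the relation `[h, f] = -2f` forces `f = f' = 0`.
-/

/-- `(e, h, f)` is an `sl₂`-triple in a Lie algebra: `[h,e] = 2e`, `[h,f] = -2f`, `[e,f] = h`. -/
def IsSl2TripleOf {L : Type*} [LieRing L] (e h f : L) : Prop :=
  ⁅h, e⁆ = 2 • e ∧ ⁅h, f⁆ = -(2 • f) ∧ ⁅e, f⁆ = h

section

variable {L : Type*} [LieRing L] {e h f f' : L}

lemma IsSl2TripleOf.f_eq_zero_of_h_eq_zero [IsAddTorsionFree L] (t : IsSl2TripleOf e 0 f) :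
    f = 0 := by
  have h2f : 2 • f = 0 := by simpa [eq_comm] using t.2.1
  simpa using h2f

lemma IsSl2TripleOf.isSl2Triple (t : IsSl2TripleOf e h f) (hh : h ≠ 0) : IsSl2Triple h e f :=
  ⟨hh, t.2.2, t.1, t.2.1⟩

variable {R : Type*} [CommRing R] [LieAlgebra R L]

lemma IsSl2Triple.hasPrimitiveVectorWith_sub (t : IsSl2Triple h e f) (ht' : IsSl2TripleOf e h f')
    (hne : f ≠ f') : t.HasPrimitiveVectorWith (f - f') (-2 : R) where
  ne_zero := sub_ne_zero.mpr hne
  lie_h := by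
    rw [lie_sub, t.lie_h_f_nsmul, ht'.2.1, neg_smul, smul_sub]
    simp only [two_smul]
    abel
  lie_e := by rw [lie_sub, t.lie_e_f, ht'.2.2, sub_self]

lemma IsSl2Triple.not_hasPrimitiveVectorWith_neg_natCast [IsDomain R] [CharZero R]
    [IsNoetherian R L] [Module.IsTorsionFree R L] (t : IsSl2Triple h e f) (m : L) {n : ℕ}
    (hn : n ≠ 0) : ¬ t.HasPrimitiveVectorWith m (-(n : R)) := by
  intro P
  obtain ⟨k, hk⟩ := P.exists_nat
  have : ((n + k : ℕ) : R) = 0 := by push_cast; linear_combination -hk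
  exact hn (Nat.add_eq_zero_iff.mp (Nat.cast_eq_zero.mp this)).1

end

/-- In a finite-dimensional Lie algebra over a field of characteristic zero, the third
element of an `sl₂`-triple is uniquely determined by the other two. -/
theorem sl2Triple_third_unique {K L : Type*} [Field K] [CharZero K]
    [LieRing L] [LieAlgebra K L] [FiniteDimensional K L]
    (e h f f' : L) (hf : IsSl2TripleOf e h f) (hf' : IsSl2TripleOf e h f') :
    f = f' := by
  have : IsAddTorsionFree L := .of_isTorsionFree K L
  rcases eq_or_ne h 0 with rfl | hh
  · rw [hf.f_eq_zero_of_h_eq_zero, hf'.f_eq_zero_of_h_eq_zero]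
  by_contra hne
  have t := hf.isSl2Triple hh
  have P : t.HasPrimitiveVectorWith (f - f') (-2 : K) := t.hasPrimitiveVectorWith_sub hf' hne
  exact t.not_hasPrimitiveVectorWith_neg_natCast (f - f') two_ne_zero (by simpa using P)
end

section
/- Let K be a field of characteristic zero, V a finite-dimensional K-vector space, and Q a quadratic form on V whose polar bilinear form is nondegenerate. Let f : V → V be a linear isomorphism with Q(f(v)) = Q(v) for all v ∈ V and det(f) = 1. Then there exists a unit g of the Clifford algebra Cl(Q), lying in the even subalgebra Cl⁺(Q), such that ι(f(v)) = g · ι(v) · g⁻¹ for all v ∈ V. (This expresses the surjectivity of the map CSpin(Q)(K) → SO(Q)(K), used in the paper via Hilbert's Theorem 90 for K = ℚ and K = ℚ_ℓ.) -/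
/-!
By the Cartan–Dieudonné argument every isometry `f` of a nondegenerate quadratic space is a product
of reflections `r_u` in anisotropic vectors: for anisotropic `v₀`, one of `f v₀ ∓ v₀` is anisotropic
(as `Q (x - y) + Q (x + y) = 4 Q x` when `Q x = Q y`), so one or two reflections take `f v₀` back to
`v₀`, and we recurse on the orthogonal complement of `v₀`. Each `r_u` has determinant `-1`, so for
`det f = 1` the number of reflections is even. In the Clifford algebra
`ι u * ι v * (ι u)⁻¹ = -ι (r_u v)`, hence the product of the `ι u`, an even unit, conjugates `ι v`
to `ι (f v)`.
-/

open QuadraticMap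
open LinearMap (BilinForm)

namespace Module

variable {R M : Type*} [CommRing R] [AddCommGroup M] [Module R M] {x : M} {f : Dual R M}

theorem det_reflection [Free R M] [Module.Finite R M] (h : f x = 2) :
    LinearMap.det (reflection h : M →ₗ[R] M) = -1 := by
  have : (reflection h : M →ₗ[R] M) = LinearMap.transvection (-f) x := by
    ext y
    simp [reflection_apply, LinearMap.transvection.apply, sub_eq_add_neg]
  rw [this, LinearMap.transvection.det, LinearMap.neg_apply, h]
  norm_num

end Module

namespace QuadraticMap

variable {K V : Type*} [Field K] [AddCommGroup V] [Module K V] (Q : QuadraticForm K V)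

theorem map_add_eq (x y : V) : Q (x + y) = Q x + Q y + polar Q x y := by
  rw [polar]; abel

theorem map_sub_eq (x y : V) : Q (x - y) = Q x + Q y - polar Q x y := by
  rw [sub_eq_add_neg, map_add_eq, QuadraticMap.map_neg, polar_neg_right, ← sub_eq_add_neg]

noncomputable def reflection {u : V} (hu : Q u ≠ 0) : V ≃ₗ[K] V :=
  Module.reflection (f := (Q u)⁻¹ • polarBilin Q u) (x := u) <| by
    simp only [LinearMap.smul_apply, polarBilin_apply_apply, polar_self, smul_eq_mul,
      nsmul_eq_mul, Nat.cast_ofNat]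
    field_simp

variable {Q} {u : V} (hu : Q u ≠ 0)

theorem reflection_apply (v : V) : Q.reflection hu v = v - ((Q u)⁻¹ * polar Q u v) • u := by
  simp [reflection, Module.reflection_apply]

theorem reflection_apply_self : Q.reflection hu u = -u := Module.reflection_apply_self _

theorem reflection_apply_of_polar_eq_zero {v : V} (h : polar Q u v = 0) :
    Q.reflection hu v = v := by
  simp [reflection_apply, h]

theorem reflection_inv : (Q.reflection hu)⁻¹ = Q.reflection hu := Module.reflection_inv _

theorem map_reflection (v : V) : Q (Q.reflection hu v) = Q v := by
  rw [reflection_apply, map_sub_eq, QuadraticMap.map_smul, polar_smul_right, polar_comm Q v u,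
    smul_eq_mul, smul_eq_mul]
  field_simp
  ring

theorem det_reflection [FiniteDimensional K V] :
    LinearMap.det (Q.reflection hu : V →ₗ[K] V) = -1 :=
  Module.det_reflection _

theorem reflection_sub_apply {x y : V} (hxy : Q x = Q y) (h : Q (x - y) ≠ 0) :
    Q.reflection h x = y := by
  have : polar Q (x - y) x = Q (x - y) := by
    rw [polar_sub_left, polar_self, map_sub_eq, hxy, polar_comm]; ring
  rw [reflection_apply, this, inv_mul_cancel₀ h, one_smul, sub_sub_cancel]

theorem reflection_add_apply {x y : V} (hxy : Q x = Q y) (h : Q (x + y) ≠ 0) :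
    Q.reflection h x = -y := by
  have : polar Q (x + y) x = Q (x + y) := by
    rw [polar_add_left, polar_self, map_add_eq, hxy, polar_comm]; ring
  rw [reflection_apply, this, inv_mul_cancel₀ h, one_smul, sub_add_cancel_left]

variable (Q) in
noncomputable def prodReflections (l : List {u : V // Q u ≠ 0}) : V ≃ₗ[K] V :=
  (l.map fun u => Q.reflection u.2).prod

@[simp]
theorem prodReflections_nil : Q.prodReflections [] = 1 := rfl

@[simp]
theorem prodReflections_cons (u : {u : V // Q u ≠ 0}) (l : List {u : V // Q u ≠ 0}) :
    Q.prodReflections (u :: l) = Q.reflection u.2 * Q.prodReflections l := rfl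

@[simp]
theorem prodReflections_append (l₁ l₂ : List {u : V // Q u ≠ 0}) :
    Q.prodReflections (l₁ ++ l₂) = Q.prodReflections l₁ * Q.prodReflections l₂ := by
  simp [prodReflections]

theorem prodReflections_inv (l : List {u : V // Q u ≠ 0}) :
    (Q.prodReflections l)⁻¹ = Q.prodReflections l.reverse := by
  simp [prodReflections, List.prod_inv_reverse, Function.comp_def, reflection_inv, List.map_reverse]

theorem map_prodReflections (l : List {u : V // Q u ≠ 0}) (v : V) :
    Q (Q.prodReflections l v) = Q v := by
  induction l with
  | nil => rfl
  | cons u l ih => rw [prodReflections_cons, LinearEquiv.mul_apply, map_reflection, ih]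

theorem det_prodReflections [FiniteDimensional K V] (l : List {u : V // Q u ≠ 0}) :
    LinearMap.det (Q.prodReflections l : V →ₗ[K] V) = (-1) ^ l.length := by
  induction l with
  | nil => simp
  | cons u l ih =>
    rw [prodReflections_cons, LinearEquiv.coe_toLinearMap_mul, map_mul, det_reflection,
      ih, List.length_cons, pow_succ']

theorem prodReflections_apply_of_forall_polar_eq_zero {l : List {u : V // Q u ≠ 0}} {v : V}
    (h : ∀ u ∈ l, polar Q u v = 0) : Q.prodReflections l v = v := by
  induction l with
  | nil => rfl
  | cons u l ih =>
    rw [List.forall_mem_cons] at h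
    rw [prodReflections_cons, LinearEquiv.mul_apply, ih h.2,
      reflection_apply_of_polar_eq_zero _ h.1]

theorem exists_prodReflections_apply_eq [NeZero (2 : K)] {x y : V} (hx : Q x ≠ 0)
    (hxy : Q x = Q y) : ∃ l, Q.prodReflections l x = y := by
  by_cases hsub : Q (x - y) = 0
  · have hadd : Q (x + y) ≠ 0 := by
      intro hadd
      have : (2 : K) * (2 * Q x) = Q (x - y) + Q (x + y) := by
        rw [map_sub_eq, map_add_eq, ← hxy]; ring
      rw [hsub, hadd, add_zero] at this
      exact hx (by simpa [two_ne_zero] using this)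
    refine ⟨[⟨y, hxy ▸ hx⟩, ⟨x + y, hadd⟩], ?_⟩
    simp [reflection_add_apply hxy hadd, reflection_apply_self]
  · exact ⟨[⟨x - y, hsub⟩], reflection_sub_apply hxy hsub⟩

theorem polar_map_map {f : V →ₗ[K] V} (hf : ∀ v, Q (f v) = Q v) (x y : V) :
    polar Q (f x) (f y) = polar Q x y := by
  simp only [polar, ← map_add, hf]

theorem exists_ne_zero_of_nondegenerate [Nontrivial V] (hQ : (polarBilin Q).Nondegenerate) :
    ∃ v, Q v ≠ 0 := by
  by_contra! h
  obtain ⟨v, hv⟩ := exists_ne (0 : V)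
  exact hv (hQ.1 v fun w => by simp [polar, h])

section Subspace

variable (W : Submodule K V)

theorem coe_reflection_comp_subtype {u : W} (hu : Q u ≠ 0) (w : W) :
    ((Q.comp W.subtype).reflection (u := u) hu w : V) = Q.reflection hu w :=
  rfl

theorem coe_prodReflections_comp_subtype (l : List {u : W // Q.comp W.subtype u ≠ 0}) (w : W) :
    ((Q.comp W.subtype).prodReflections l w : V) =
      Q.prodReflections (l.map fun u => ⟨u.1, u.2⟩) w := by
  induction l generalizing w with
  | nil => rfl
  | cons u l ih =>
    rw [List.map_cons, prodReflections_cons, prodReflections_cons, LinearEquiv.mul_apply,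
      LinearEquiv.mul_apply, coe_reflection_comp_subtype W u.2, ih]

theorem eq_prodReflections_of_restrict_eq {v₀ : V} (hcod : Codisjoint (K ∙ v₀) W)
    (horth : ∀ w ∈ W, polar Q w v₀ = 0) {f : V →ₗ[K] V} (hfv₀ : f v₀ = v₀)
    (hW : ∀ w ∈ W, f w ∈ W) (l : List {u : W // Q.comp W.subtype u ≠ 0})
    (hl : f.restrict hW = (Q.comp W.subtype).prodReflections l) :
    f = Q.prodReflections (l.map fun u => ⟨u.1, u.2⟩) := by
  refine LinearMap.ext_on_codisjoint hcod ?_ ?_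
  · intro x hx
    obtain ⟨c, rfl⟩ := Submodule.mem_span_singleton.mp hx
    have hfix : Q.prodReflections (l.map fun u => ⟨u.1, u.2⟩) v₀ = v₀ :=
      prodReflections_apply_of_forall_polar_eq_zero <| by
        simp only [List.mem_map]
        rintro _ ⟨u, -, rfl⟩
        exact horth u.1 u.1.2
    rw [LinearMap.map_smul, LinearMap.map_smul, hfv₀, LinearEquiv.coe_coe, hfix]
  · intro w hw
    change (f.restrict hW ⟨w, hw⟩ : V) = _
    rw [hl]
    exact coe_prodReflections_comp_subtype W l ⟨w, hw⟩

end Subspace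

section OrthogonalComplement

variable {v₀ : V}

theorem polar_self_ne_zero [NeZero (2 : K)] (hv₀ : Q v₀ ≠ 0) : polar Q v₀ v₀ ≠ 0 := by
  rw [polar_self, nsmul_eq_mul, Nat.cast_ofNat]
  exact mul_ne_zero two_ne_zero hv₀

theorem mem_orthogonal_span_singleton_iff {w : V} :
    w ∈ BilinForm.orthogonal (polarBilin Q) (K ∙ v₀) ↔ polar Q v₀ w = 0 := by
  rw [BilinForm.orthogonal_span_singleton_eq_toLin_ker]
  rfl

theorem nondegenerate_comp_subtype_orthogonal [NeZero (2 : K)]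
    (hQ : (polarBilin Q).Nondegenerate) (hv₀ : Q v₀ ≠ 0) :
    (polarBilin (Q.comp (BilinForm.orthogonal (polarBilin Q) (K ∙ v₀)).subtype)).Nondegenerate :=
  BilinForm.restrict_nondegenerate_orthogonal_spanSingleton _ hQ
    (fun x y h => by rwa [polarBilin_apply_apply, polar_comm] at h) (polar_self_ne_zero hv₀)

theorem mapsTo_orthogonal_span_singleton {f : V →ₗ[K] V} (hf : ∀ v, Q (f v) = Q v)
    (hfv₀ : f v₀ = v₀) (w : V) (hw : w ∈ BilinForm.orthogonal (polarBilin Q) (K ∙ v₀)) :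
    f w ∈ BilinForm.orthogonal (polarBilin Q) (K ∙ v₀) := by
  rw [mem_orthogonal_span_singleton_iff] at hw ⊢
  rw [← hfv₀, polar_map_map hf, hw]

end OrthogonalComplement

theorem exists_eq_prodReflections [NeZero (2 : K)] [FiniteDimensional K V]
    (hQ : (polarBilin Q).Nondegenerate) (f : V →ₗ[K] V) (hf : ∀ v, Q (f v) = Q v) :
    ∃ l, f = Q.prodReflections l := by
  obtain ⟨n, hn⟩ : ∃ n, Module.finrank K V = n := ⟨_, rfl⟩
  induction n generalizing V with
  | zero =>
    have : Subsingleton V := Module.finrank_zero_iff.mp hn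
    exact ⟨[], Subsingleton.elim _ _⟩
  | succ n ih =>
    have : Nontrivial V := Module.nontrivial_of_finrank_eq_succ hn
    obtain ⟨v₀, hv₀⟩ := exists_ne_zero_of_nondegenerate hQ
    obtain ⟨l₀, hl₀⟩ := exists_prodReflections_apply_eq (x := f v₀) (y := v₀) (by rwa [hf]) (hf v₀)
    set g := (Q.prodReflections l₀ : V →ₗ[K] V) ∘ₗ f
    have hg : ∀ v, Q (g v) = Q v := fun v => by simp [g, map_prodReflections, hf]
    have hgW := mapsTo_orthogonal_span_singleton hg hl₀
    set W := BilinForm.orthogonal (polarBilin Q) (K ∙ v₀)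
    have hfinrank : Module.finrank K W = n := by
      rw [BilinForm.finrank_orthogonal hQ, hn, finrank_span_singleton (by rintro rfl; simp at hv₀),
        Nat.add_sub_cancel]
    obtain ⟨l, hl⟩ := ih (Q := Q.comp W.subtype) (nondegenerate_comp_subtype_orthogonal hQ hv₀)
      (g.restrict hgW) (fun w => hg w) hfinrank
    refine ⟨l₀.reverse ++ l.map fun u => ⟨u.1, u.2⟩, ?_⟩
    have hcompl := BilinForm.isCompl_span_singleton_orthogonal (B := polarBilin Q)
      (polar_self_ne_zero hv₀)
    have horth (w : V) (hw : w ∈ W) : polar Q w v₀ = 0 := by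
      rw [polar_comm]; exact mem_orthogonal_span_singleton_iff.mp hw
    rw [prodReflections_append, ← prodReflections_inv, LinearEquiv.coe_toLinearMap_mul,
      ← eq_prodReflections_of_restrict_eq W hcompl.codisjoint horth hl₀ hgW l hl]
    ext v
    simp [g]

end QuadraticMap

namespace CliffordAlgebra

variable {K V : Type*} [Field K] [AddCommGroup V] [Module K V] (Q : QuadraticForm K V)

noncomputable def ιUnit {u : V} (hu : Q u ≠ 0) : (CliffordAlgebra Q)ˣ :=
  (isUnit_ι_of_isUnit Q (isUnit_iff_ne_zero.mpr hu)).unit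

noncomputable def versor (l : List {u : V // Q u ≠ 0}) : (CliffordAlgebra Q)ˣ :=
  (l.map fun u => ιUnit Q u.2).prod

variable {Q}

theorem ιUnit_mul_ι_mul_inv {u : V} (hu : Q u ≠ 0) (v : V) :
    (ιUnit Q hu : CliffordAlgebra Q) * ι Q v * ↑(ιUnit Q hu)⁻¹ = -ι Q (Q.reflection hu v) := by
  let := invertibleOfNonzero hu
  let := invertibleιOfInvertible Q u
  have hinv : ⅟(ι Q u) = ↑(ιUnit Q hu)⁻¹ := invOf_eq_right_inv (ιUnit Q hu).mul_inv
  rw [← hinv, ιUnit, IsUnit.unit_spec, ι_mul_ι_mul_invOf_ι, reflection_apply, ← map_neg, neg_sub,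
    invOf_eq_inv]

theorem versor_mul_ι_mul_inv (l : List {u : V // Q u ≠ 0}) (v : V) :
    (versor Q l : CliffordAlgebra Q) * ι Q v * ↑(versor Q l)⁻¹ =
      (-1 : K) ^ l.length • ι Q (Q.prodReflections l v) := by
  induction l generalizing v with
  | nil => simp [versor]
  | cons u l ih =>
    have hcons : versor Q (u :: l) = ιUnit Q u.2 * versor Q l := rfl
    calc (versor Q (u :: l) : CliffordAlgebra Q) * ι Q v * ↑(versor Q (u :: l))⁻¹
        = ιUnit Q u.2 * (versor Q l * ι Q v * ↑(versor Q l)⁻¹) * ↑(ιUnit Q u.2)⁻¹ := by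
          simp only [hcons, mul_inv_rev, Units.val_mul, mul_assoc]
      _ = (-1 : K) ^ (u :: l).length • ι Q (Q.prodReflections (u :: l) v) := by
          rw [ih, mul_smul_comm, smul_mul_assoc, ιUnit_mul_ι_mul_inv, prodReflections_cons,
            LinearEquiv.mul_apply, List.length_cons, pow_succ, mul_neg_one, neg_smul, smul_neg]

theorem versor_mem_evenOdd (l : List {u : V // Q u ≠ 0}) :
    (versor Q l : CliffordAlgebra Q) ∈ evenOdd Q l.length := by
  induction l with
  | nil => simpa [versor] using one_le_evenOdd_zero Q
  | cons u l ih =>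
    have h := SetLike.mul_mem_graded (ι_mem_evenOdd_one Q u.1) ih
    rwa [add_comm, ← Nat.cast_succ] at h

end CliffordAlgebra

/-- Surjectivity of `CSpin(Q)(K) → SO(Q)(K)`: over a field `K` of characteristic zero, any
linear automorphism `f` of a finite-dimensional quadratic space `(V, Q)` with nondegenerate
polar form that preserves `Q` and has determinant `1` is induced by conjugation by an even
unit `g` of the Clifford algebra: `ι(f v) = g ⬝ ι(v) ⬝ g⁻¹` for all `v`. -/
theorem exists_even_unit_conj_of_isometry_det_one
    {K V : Type*} [Field K] [CharZero K] [AddCommGroup V] [Module K V]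
    [FiniteDimensional K V] (Q : QuadraticForm K V)
    (hQ : LinearMap.BilinForm.Nondegenerate (QuadraticMap.polarBilin Q))
    (f : V ≃ₗ[K] V) (hf : ∀ v : V, Q (f v) = Q v)
    (hdet : LinearMap.det (f : V →ₗ[K] V) = 1) :
    ∃ g : (CliffordAlgebra Q)ˣ, (g : CliffordAlgebra Q) ∈ CliffordAlgebra.even Q ∧
      ∀ v : V, CliffordAlgebra.ι Q (f v) =
        (g : CliffordAlgebra Q) * CliffordAlgebra.ι Q v * ((g⁻¹ : _) : CliffordAlgebra Q) := by
  obtain ⟨l, hl⟩ := QuadraticMap.exists_eq_prodReflections hQ f hf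
  have hl_even : Even l.length := by
    rwa [hl, QuadraticMap.det_prodReflections, neg_one_pow_eq_one_iff_even (by norm_num)] at hdet
  refine ⟨CliffordAlgebra.versor Q l, ?_, fun v => ?_⟩
  · rw [← Subalgebra.mem_toSubmodule, CliffordAlgebra.even_toSubmodule,
      ← ZMod.natCast_eq_zero_iff_even.mpr hl_even]
    exact CliffordAlgebra.versor_mem_evenOdd l
  · rw [CliffordAlgebra.versor_mul_ι_mul_inv, hl_even.neg_one_pow, one_smul]
    exact congrArg (CliffordAlgebra.ι Q) (LinearMap.congr_fun hl v)
end
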